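/- arXiv:2303.05736 — 3 statements merged into one kernel-verified Lean document; each statement's English description precedes it below -/
import Mathlib

section
/- The function Ξ(θ) = (6 sin²θ + cos²θ cos 2θ)/(9 sin²θ + cos⁶θ) satisfies 0.6 < Ξ(θ) ≤ 1 for all θ ∈ (-π/2, π/2), with equality Ξ(θ) = 1 attained at θ = 0. -/
open Real

theorem Xi_bounds (θ : ℝ) (hθ : θ ∈ Set.Ioo (-(π / 2)) (π / 2)) :
    (0.6 : ℝ) < (6 * sin θ ^ 2 + cos θ ^ 2 * cos (2 * θ)) / (9 * sin θ ^ 2 + cos θ ^ 6)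
      ∧ (6 * sin θ ^ 2 + cos θ ^ 2 * cos (2 * θ)) / (9 * sin θ ^ 2 + cos θ ^ 6) ≤ 1
      ∧ (6 * sin (0 : ℝ) ^ 2 + cos (0 : ℝ) ^ 2 * cos (2 * 0))
          / (9 * sin (0 : ℝ) ^ 2 + cos (0 : ℝ) ^ 6) = 1 := by
  have hc : 0 < cos θ := Real.cos_pos_of_mem_Ioo hθ
  have hpy : sin θ ^ 2 + cos θ ^ 2 = 1 := sin_sq_add_cos_sq θ
  have hD : 0 < 9 * sin θ ^ 2 + cos θ ^ 6 := by positivity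
  have h2 : cos (2 * θ) = cos θ ^ 2 - sin θ ^ 2 := by rw [cos_two_mul]; linarith
  refine ⟨?_, ?_, by norm_num⟩
  · rw [lt_div_iff₀ hD, h2]
    nlinarith [sq_nonneg (sin θ), sq_nonneg (cos θ), sq_nonneg (sin θ * cos θ),
      sq_nonneg (sin θ ^ 2 - 1/2), mul_nonneg (sq_nonneg (sin θ)) (sq_nonneg (cos θ)),
      mul_nonneg (mul_nonneg (sq_nonneg (sin θ)) (sq_nonneg (sin θ))) (sq_nonneg (cos θ))]
  · rw [div_le_one hD, h2]
    nlinarith [sq_nonneg (sin θ), sq_nonneg (cos θ), mul_nonneg (sq_nonneg (sin θ)) (sq_nonneg (cos θ)),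
      mul_nonneg (mul_nonneg (sq_nonneg (sin θ)) (sq_nonneg (cos θ))) (sq_nonneg (cos θ))]
end

section
/- The function h(x) = arctan(x) - (1/x)·ln²(x + √(1+x²)) defined for x > 0 is strictly positive for all x > 0. -/
/-!
Substituting `x = sinh t` turns the claim into `t ^ 2 < sinh t * arctan (sinh t)` for `t > 0`.
Both sides vanish at `t = 0`, and since `arctan ∘ sinh` has derivative `1 / cosh`, differentiating
the difference twice leaves `sinh t * (arctan (sinh t) - sinh t / cosh t ^ 2)`. The bracket vanishes
at `0` and has derivative `2 sinh t ^ 2 / cosh t ^ 3 > 0`, so three monotonicity arguments finish.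
-/

open Real Set

lemma lt_of_hasDerivAt_pos {f f' : ℝ → ℝ} {a b : ℝ}
    (hf : ∀ x ∈ Icc a b, HasDerivAt f (f' x) x) (hf' : ∀ x ∈ Ioo a b, 0 < f' x) (hab : a < b) :
    f a < f b := by
  have hmono : StrictMonoOn f (Icc a b) := by
    refine strictMonoOn_of_hasDerivWithinAt_pos (f' := f') (convex_Icc a b)
      (fun x hx => (hf x hx).continuousAt.continuousWithinAt) (fun x hx => ?_) ?_
    · rw [interior_Icc] at hx ⊢
      exact (hf x (Ioo_subset_Icc_self hx)).hasDerivWithinAt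
    · simpa only [interior_Icc] using hf'
  exact hmono (left_mem_Icc.mpr hab.le) (right_mem_Icc.mpr hab.le) hab

lemma hasDerivAt_arctan_sinh (t : ℝ) :
    HasDerivAt (fun s => arctan (sinh s)) (1 / cosh t) t := by
  refine ((hasDerivAt_arctan (sinh t)).comp t (hasDerivAt_sinh t)).congr_deriv ?_
  have hcosh : cosh t ≠ 0 := (cosh_pos t).ne'
  rw [← cosh_sq']
  field_simp

lemma sinh_div_cosh_sq_lt_arctan_sinh {t : ℝ} (ht : 0 < t) :
    sinh t / cosh t ^ 2 < arctan (sinh t) := by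
  have hderiv (s : ℝ) : HasDerivAt (fun s => arctan (sinh s) - sinh s / cosh s ^ 2)
      (2 * sinh s ^ 2 / cosh s ^ 3) s := by
    have hcosh : cosh s ≠ 0 := (cosh_pos s).ne'
    refine ((hasDerivAt_arctan_sinh s).sub ((hasDerivAt_sinh s).div
      ((hasDerivAt_cosh s).pow 2) (pow_ne_zero 2 hcosh))).congr_deriv ?_
    simp only [Pi.pow_apply]
    field_simp
    ring
  have := lt_of_hasDerivAt_pos (fun s _ => hderiv s)
    (fun s hs => by have hsinh := sinh_pos_iff.mpr hs.1; positivity) ht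
  simpa [sub_pos] using this

lemma two_mul_lt_cosh_mul_arctan_sinh_add_sinh_div_cosh {t : ℝ} (ht : 0 < t) :
    2 * t < cosh t * arctan (sinh t) + sinh t / cosh t := by
  have hderiv (s : ℝ) : HasDerivAt
      (fun s => cosh s * arctan (sinh s) + sinh s / cosh s - 2 * s)
      (sinh s * (arctan (sinh s) - sinh s / cosh s ^ 2)) s := by
    have hcosh : cosh s ≠ 0 := (cosh_pos s).ne'
    refine ((((hasDerivAt_cosh s).mul (hasDerivAt_arctan_sinh s)).add
      ((hasDerivAt_sinh s).div (hasDerivAt_cosh s) hcosh)).sub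
      ((hasDerivAt_id s).const_mul 2)).congr_deriv ?_
    field_simp
    ring
  have := lt_of_hasDerivAt_pos (fun s _ => hderiv s) (fun s hs =>
    mul_pos (sinh_pos_iff.mpr hs.1) (sub_pos.mpr (sinh_div_cosh_sq_lt_arctan_sinh hs.1))) ht
  simp only [sinh_zero, arctan_zero, mul_zero, zero_div, add_zero, sub_zero] at this
  linarith

lemma sq_lt_sinh_mul_arctan_sinh {t : ℝ} (ht : 0 < t) :
    t ^ 2 < sinh t * arctan (sinh t) := by
  have hderiv (s : ℝ) : HasDerivAt (fun s => sinh s * arctan (sinh s) - s ^ 2)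
      (cosh s * arctan (sinh s) + sinh s / cosh s - 2 * s) s := by
    have hcosh : cosh s ≠ 0 := (cosh_pos s).ne'
    refine (((hasDerivAt_sinh s).mul (hasDerivAt_arctan_sinh s)).sub
      (hasDerivAt_pow 2 s)).congr_deriv ?_
    field_simp
    ring
  have := lt_of_hasDerivAt_pos (fun s _ => hderiv s)
    (fun s hs => sub_pos.mpr (two_mul_lt_cosh_mul_arctan_sinh_add_sinh_div_cosh hs.1)) ht
  simpa [sub_pos] using this

theorem arctan_sub_arsinh_sq_pos (x : ℝ) (hx : 0 < x) :
    0 < arctan x - (1 / x) * Real.log (x + Real.sqrt (1 + x ^ 2)) ^ 2 := by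
  have key := sq_lt_sinh_mul_arctan_sinh (arsinh_pos_iff.mpr hx)
  rw [sinh_arsinh] at key
  change 0 < arctan x - 1 / x * arsinh x ^ 2
  rw [sub_pos, one_div, ← div_eq_inv_mul, div_lt_iff₀ hx]
  linarith
end

section
/- Let Q' be the 2×2 real symmetric matrix with entries Q'₁₁ = ‖g_θ‖² sin²Ω, Q'₂₂ = ‖g_r‖² sin²Θ, and Q'₁₂ = Q'₂₁ = Re(gᴴ W g)/‖g‖², where g, g_θ, g_r ∈ ℂ^K with g ≠ 0, W = (g_θᴴ g_r) I - g_θ g_rᴴ, sin²Ω = 1 - |g_θᴴ g|²/(‖g_θ‖²‖g‖²), and sin²Θ = 1 - |g_rᴴ g|²/(‖g_r‖²‖g‖²). In the special case g_r = λ g_θ for some λ ∈ ℝ (proportional derivative vectors), det Q' = 0. -/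
/-!
Since `g_r = λ g_θ`, every entry of `Q'` is a multiple of `x = ‖g_θ‖² - |g_θᴴ g|² / ‖g‖²`
(the squared norm of the component of `g_θ` orthogonal to `g`): `Q' = x [[1, λ], [λ, λ²]]`,
a rank-one matrix.
-/

open scoped ComplexInnerProductSpace

lemma Matrix.det_fin_two_mul_sq_of {R : Type*} [CommRing R] (x μ : R) : !![x, μ * x; μ * x, μ ^ 2 * x].det = 0 := by
  rw [Matrix.det_fin_two_of]; ring

section

variable {E : Type*} [NormedAddCommGroup E] [InnerProductSpace ℂ E]

lemma sq_norm_mul_one_sub_sq_norm_inner_div (u v : E) :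
    ‖u‖ ^ 2 * (1 - ‖⟪u, v⟫‖ ^ 2 / (‖u‖ ^ 2 * ‖v‖ ^ 2)) = ‖u‖ ^ 2 - ‖⟪u, v⟫‖ ^ 2 / ‖v‖ ^ 2 := by
  rcases eq_or_ne u 0 with rfl | hu
  · simp
  · have hu2 : ‖u‖ ^ 2 ≠ 0 := by positivity
    rw [mul_one_sub, mul_div_assoc', mul_div_mul_left _ _ hu2]

lemma inner_mul_inner_swap_eq_sq_norm (u v : E) : ⟪v, u⟫ * ⟪u, v⟫ = (‖⟪u, v⟫‖ : ℂ) ^ 2 := by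
  rw [← inner_conj_symm, Complex.conj_mul']

lemma sq_norm_real_smul_sub_sq_norm_inner_div (μ : ℝ) (u v : E) :
    ‖(μ : ℂ) • u‖ ^ 2 - ‖⟪(μ : ℂ) • u, v⟫‖ ^ 2 / ‖v‖ ^ 2
      = μ ^ 2 * (‖u‖ ^ 2 - ‖⟪u, v⟫‖ ^ 2 / ‖v‖ ^ 2) := by
  rw [inner_smul_left, Complex.conj_ofReal, norm_smul, norm_mul, Complex.norm_real,
    Real.norm_eq_abs, mul_pow, mul_pow, sq_abs]
  ring

lemma re_inner_real_smul_mul_sub_div (μ : ℝ) (u : E) {v : E} (hv : v ≠ 0) :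
    (⟪u, (μ : ℂ) • u⟫ * (‖v‖ : ℂ) ^ 2 - ⟪v, u⟫ * ⟪(μ : ℂ) • u, v⟫).re / ‖v‖ ^ 2
      = μ * (‖u‖ ^ 2 - ‖⟪u, v⟫‖ ^ 2 / ‖v‖ ^ 2) := by
  have hv2 : ‖v‖ ^ 2 ≠ 0 := by positivity
  have hcross : ⟪u, (μ : ℂ) • u⟫ * (‖v‖ : ℂ) ^ 2 - ⟪v, u⟫ * ⟪(μ : ℂ) • u, v⟫
      = ((μ * (‖u‖ ^ 2 * ‖v‖ ^ 2 - ‖⟪u, v⟫‖ ^ 2) : ℝ) : ℂ) := by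
    rw [inner_smul_right, inner_smul_left, Complex.conj_ofReal, inner_self_eq_norm_sq_to_K,
      mul_left_comm, inner_mul_inner_swap_eq_sq_norm]
    simp only [RCLike.ofReal_eq_complex_ofReal]
    push_cast
    ring
  rw [hcross, Complex.ofReal_re]
  field_simp

end

theorem det_Q_zero_of_proportional_general (K : ℕ) (g gθ gr : EuclideanSpace ℂ (Fin K))
    (hg : g ≠ 0)
    (lam : ℝ) (hprop : gr = (lam : ℂ) • gθ) :
    Matrix.det
        !![‖gθ‖ ^ 2 * (1 - ‖(inner ℂ gθ g : ℂ)‖ ^ 2 / (‖gθ‖ ^ 2 * ‖g‖ ^ 2)),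
            ((inner ℂ gθ gr : ℂ) * (‖g‖ ^ 2 : ℂ)
              - (inner ℂ g gθ : ℂ) * (inner ℂ gr g : ℂ)).re / ‖g‖ ^ 2;
          ((inner ℂ gθ gr : ℂ) * (‖g‖ ^ 2 : ℂ)
              - (inner ℂ g gθ : ℂ) * (inner ℂ gr g : ℂ)).re / ‖g‖ ^ 2,
            ‖gr‖ ^ 2 * (1 - ‖(inner ℂ gr g : ℂ)‖ ^ 2 / (‖gr‖ ^ 2 * ‖g‖ ^ 2))]
      = 0 := by
  subst hprop
  rw [sq_norm_mul_one_sub_sq_norm_inner_div, sq_norm_mul_one_sub_sq_norm_inner_div,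
    sq_norm_real_smul_sub_sq_norm_inner_div, re_inner_real_smul_mul_sub_div lam gθ hg]
  exact Matrix.det_fin_two_mul_sq_of _ lam

theorem det_Q_zero_of_proportional (K : ℕ) (g gθ gr : EuclideanSpace ℂ (Fin K))
    (hg : g ≠ 0) (hgθ : gθ ≠ 0) (hgr : gr ≠ 0)
    (lam : ℝ) (hprop : gr = (lam : ℂ) • gθ) :
    Matrix.det
        !![‖gθ‖ ^ 2 * (1 - ‖(inner ℂ gθ g : ℂ)‖ ^ 2 / (‖gθ‖ ^ 2 * ‖g‖ ^ 2)),
            ((inner ℂ gθ gr : ℂ) * (‖g‖ ^ 2 : ℂ)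
              - (inner ℂ g gθ : ℂ) * (inner ℂ gr g : ℂ)).re / ‖g‖ ^ 2;
          ((inner ℂ gθ gr : ℂ) * (‖g‖ ^ 2 : ℂ)
              - (inner ℂ g gθ : ℂ) * (inner ℂ gr g : ℂ)).re / ‖g‖ ^ 2,
            ‖gr‖ ^ 2 * (1 - ‖(inner ℂ gr g : ℂ)‖ ^ 2 / (‖gr‖ ^ 2 * ‖g‖ ^ 2))]
      = 0 :=
  det_Q_zero_of_proportional_general K g gθ gr hg lam hprop
end
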